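/- Let k be a field of characteristic p > 0 and B a finite-dimensional commutative k-algebra with a k-algebra homomorphism π : B → k such that x^p = 0 for every x ∈ ker π. Let k ⊆ K ⊆ L and k ⊆ K ⊆ M be towers of fields, let Ω be an algebraically closed field extension of L, and suppose: ∂ : K → L ⊗_k B is a B-operator; c : M → Ω ⊗_k B is a B-operator and b : M → L is a K-algebra homomorphism (i.e. b|_K = ∂₀) such that c|_K = ι ∘ ∂ (where ι : L ⊗_k B → Ω ⊗_k B is induced by L ⊆ Ω) and (id_Ω ⊗ π) ∘ c equals the composition of b with the inclusion L ⊆ Ω. Then there exists a B-operator c' : M → L ⊗_k B such that c'|_K = ∂ and (id_L ⊗ π) ∘ c' = b. -/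

import Mathlib

/-!
The preimage under `c` of `L ⊗[k] B ⊆ Ω ⊗[k] B` is the graph of a partial `k`-algebra map
`M ⇀ L ⊗[k] B` that extends `δ` and sends every `m ^ p` to `(b m ⊗ 1) ^ p`: in `Ω ⊗[k] B` every
`x` satisfies `x ^ p = x₀ ^ p ⊗ 1` with `x₀ = (id ⊗ π) x`, because `p`-th powers kill `ker π`.
By Zorn such a graph has a maximal extension. Its domain is a field containing `M ^ p`, so an
element `m` outside it has minimal polynomial `X ^ p - m ^ p`, and `m ↦ b m ⊗ 1` extends the map
further; hence the domain is all of `M`. Finally `(id ⊗ π) ∘ c'` and `b` agree after Frobenius,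
which is injective on `L`.
-/

open TensorProduct

/-- The underlying homomorphism extractor `∂₀ = (id_T ⊗ π) ∘ ∂` of a `B`-operator:
the algebra map `T ⊗[k] B → T` induced by `π : B → k` and `T ⊗[k] k ≅ T`. -/
noncomputable def BOp.counit (k T B : Type*) [CommSemiring k] [CommSemiring T] [Algebra k T]
    [CommSemiring B] [Algebra k B] (π : B →ₐ[k] k) : T ⊗[k] B →ₐ[k] T :=
  (Algebra.TensorProduct.rid k k T).toAlgHom.comp
    (Algebra.TensorProduct.map (AlgHom.id k T) π)

open Polynomial IntermediateField

namespace BOp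

@[simp] theorem counit_tmul {k B : Type*} [CommSemiring k] [CommSemiring B] [Algebra k B]
    (π : B →ₐ[k] k) (T : Type*) [CommSemiring T] [Algebra k T] (t : T) (b : B) :
    BOp.counit k T B π (t ⊗ₜ b) = π b • t := rfl

variable {k B : Type*} [Field k] [CommRing B] [Algebra k B] (π : B →ₐ[k] k)

theorem pow_sub_counit_tmul_one_eq_zero (p : ℕ) [Fact p.Prime] [CharP k p]
    (hπ : ∀ x ∈ RingHom.ker π, x ^ p = 0) (T : Type*) [CommRing T] [Algebra k T] [Nontrivial T]
    (a : T ⊗[k] B) : (a - BOp.counit k T B π a ⊗ₜ 1) ^ p = 0 := by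
  have : Nontrivial (T ⊗[k] B) := (BOp.counit k T B π).domain_nontrivial
  have : CharP (T ⊗[k] B) p := charP_of_injective_algebraMap' k p
  induction a using TensorProduct.induction_on with
  | zero => simp [(Fact.out : p.Prime).ne_zero]
  | tmul t b =>
    have hb : b - algebraMap k B (π b) ∈ RingHom.ker π := by simp
    rw [counit_tmul, smul_tmul, ← Algebra.algebraMap_eq_smul_one, ← tmul_sub,
      Algebra.TensorProduct.tmul_pow, hπ _ hb, tmul_zero]
  | add x y hx hy =>
    rw [map_add, add_tmul, add_sub_add_comm, add_pow_char, hx, hy, add_zero]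

theorem pow_eq_counit_pow_tmul_one (p : ℕ) [Fact p.Prime] [CharP k p]
    (hπ : ∀ x ∈ RingHom.ker π, x ^ p = 0) (T : Type*) [CommRing T] [Algebra k T] [Nontrivial T]
    (a : T ⊗[k] B) : a ^ p = (BOp.counit k T B π a ^ p) ⊗ₜ 1 := by
  have : Nontrivial (T ⊗[k] B) := (BOp.counit k T B π).domain_nontrivial
  have : CharP (T ⊗[k] B) p := charP_of_injective_algebraMap' k p
  rw [← sub_add_cancel a (BOp.counit k T B π a ⊗ₜ 1), add_pow_char,
    pow_sub_counit_tmul_one_eq_zero π p hπ, zero_add, Algebra.TensorProduct.tmul_pow, one_pow,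
    map_add, map_sub, sub_add_cancel]

end BOp

theorem Algebra.TensorProduct.map_id_injective {k T T' B : Type*} [Field k] [CommRing T]
    [Algebra k T] [CommRing T'] [Algebra k T'] [CommRing B] [Algebra k B] {f : T →ₐ[k] T'}
    (hf : Function.Injective f) : Function.Injective (map f (AlgHom.id k B)) :=
  Module.Flat.rTensor_preserves_injective_linearMap f.toLinearMap hf

theorem minpoly_eq_X_pow_sub_C_of_pow_eq {F E : Type*} [Field F] [Field E] [Algebra F E]
    {p : ℕ} [hp : Fact p.Prime] [CharP E p] {x : E} {a : F} (hx : x ^ p = algebraMap F E a)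
    (hxF : x ∉ (algebraMap F E).range) : minpoly F x = X ^ p - C a := by
  have hroot : aeval x (X ^ p - C a) = 0 := by simp [hx]
  refine (minpoly.eq_of_irreducible_of_monic ?_ hroot (monic_X_pow_sub_C a hp.out.ne_zero)).symm
  refine X_pow_sub_C_irreducible_of_prime hp.out fun r hr => hxF ⟨r, frobenius_inj E p ?_⟩
  rw [frobenius_def, frobenius_def, hx, ← hr, map_pow]

namespace Subalgebra

variable {k M A : Type*} [Field k] [Field M] [CommRing A] [Algebra k M] [Algebra k A]

/-- For a subalgebra, this single-valuedness condition says that `Γ` is the graph of a partial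
map `M ⇀ A`, necessarily an algebra map on its domain `Γ.dom`. -/
def IsGraph (Γ : Subalgebra k (M × A)) : Prop := ∀ z ∈ Γ, z.1 = 0 → z.2 = 0

def dom (Γ : Subalgebra k (M × A)) : Subalgebra k M := ((AlgHom.fst k M A).comp Γ.val).range

theorem mem_dom {Γ : Subalgebra k (M × A)} {x : M} : x ∈ Γ.dom ↔ ∃ a, (x, a) ∈ Γ :=
  ⟨fun ⟨z, hz⟩ => ⟨z.1.2, hz ▸ z.2⟩, fun ⟨a, h⟩ => ⟨⟨(x, a), h⟩, rfl⟩⟩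

theorem dom_mono {Γ Γ' : Subalgebra k (M × A)} (h : Γ ≤ Γ') : Γ.dom ≤ Γ'.dom :=
  fun _ hx => mem_dom.2 ((mem_dom.1 hx).imp fun _ ha => h ha)

theorem inv_mem_dom {Γ : Subalgebra k (M × A)} {p : ℕ} (hp : p ≠ 0)
    (hpow : ∀ m : M, ∃ y : A, (m ^ p, y ^ p) ∈ Γ) {x : M} (hx : x ∈ Γ.dom) : x⁻¹ ∈ Γ.dom := by
  rcases eq_or_ne x 0 with rfl | hx0
  · simp
  obtain ⟨a, ha⟩ := mem_dom.1 hx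
  obtain ⟨y, hy⟩ := hpow x⁻¹
  obtain ⟨n, rfl⟩ := Nat.exists_eq_succ_of_ne_zero hp
  have hinv : x ^ n * x⁻¹ ^ (n + 1) = x⁻¹ := by
    rw [pow_succ, ← mul_assoc, ← mul_pow, mul_inv_cancel₀ hx0, one_pow, one_mul]
  exact mem_dom.2 ⟨a ^ n * y ^ (n + 1), hinv ▸ mul_mem (pow_mem ha n) hy⟩

theorem isGraph_sSup {C : Set (Subalgebra k (M × A))} (hne : C.Nonempty)
    (hC : IsChain (· ≤ ·) C) (hgraph : ∀ Γ ∈ C, Γ.IsGraph) : (sSup C).IsGraph := by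
  have := hne.to_subtype
  intro z hz
  rw [sSup_eq_iSup', ← SetLike.mem_coe,
    Subalgebra.coe_iSup_of_directed hC.directedOn.directed_val, Set.mem_iUnion] at hz
  obtain ⟨Γ, hzΓ⟩ := hz
  exact hgraph Γ Γ.2 z hzΓ

namespace IsGraph

variable {Γ : Subalgebra k (M × A)}

theorem eq_of_mem (hΓ : Γ.IsGraph) {x : M} {a a' : A} (h : (x, a) ∈ Γ) (h' : (x, a') ∈ Γ) :
    a = a' :=
  sub_eq_zero.mp (hΓ _ (sub_mem h h') (sub_self x))

theorem injective_fst (hΓ : Γ.IsGraph) : Function.Injective ((AlgHom.fst k M A).comp Γ.val) :=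
  (injective_iff_map_eq_zero _).2 fun z hz => Subtype.ext (Prod.ext hz (hΓ z z.2 hz))

noncomputable def toAlgHom (hΓ : Γ.IsGraph) : Γ.dom →ₐ[k] A :=
  ((AlgHom.snd k M A).comp Γ.val).comp (AlgEquiv.ofInjective _ hΓ.injective_fst).symm.toAlgHom

theorem toAlgHom_apply (hΓ : Γ.IsGraph) {x : M} {a : A} (h : (x, a) ∈ Γ) (hx : x ∈ Γ.dom) :
    hΓ.toAlgHom ⟨x, hx⟩ = a := by
  set z := (AlgEquiv.ofInjective _ hΓ.injective_fst).symm ⟨x, hx⟩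
  have hz : z.1.1 = x :=
    congrArg Subtype.val ((AlgEquiv.ofInjective _ hΓ.injective_fst).apply_symm_apply ⟨x, hx⟩)
  have hmem : (x, z.1.2) ∈ Γ := hz ▸ z.2
  exact hΓ.eq_of_mem hmem h

theorem exists_le_and_mem_dom (hΓ : Γ.IsGraph) {p : ℕ} [Fact p.Prime] [CharP M p]
    (hinv : ∀ x ∈ Γ.dom, x⁻¹ ∈ Γ.dom) {m : M} (hm : m ∉ Γ.dom) {y : A}
    (hy : (m ^ p, y ^ p) ∈ Γ) : ∃ Γ', Γ ≤ Γ' ∧ Γ'.IsGraph ∧ m ∈ Γ'.dom := by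
  -- `m` has minimal polynomial `X ^ p - m ^ p` over the domain, and `y` is a root of it in `A`.
  let F : IntermediateField k M := Γ.dom.toIntermediateField hinv
  let φ : F →ₐ[k] A := hΓ.toAlgHom
  let _ : Algebra F A := φ.toAlgebra
  have : IsScalarTower k F A := .of_algebraMap_eq fun r => (φ.commutes r).symm
  have hmp : m ^ p ∈ Γ.dom := mem_dom.2 ⟨_, hy⟩
  have hminpoly : minpoly F m = X ^ p - C ⟨m ^ p, hmp⟩ :=
    minpoly_eq_X_pow_sub_C_of_pow_eq rfl fun ⟨x, hx⟩ => hm (hx ▸ x.2)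
  have hint : IsIntegral F m :=
    .of_pow (Fact.out : p.Prime).pos (isIntegral_algebraMap (x := (⟨m ^ p, hmp⟩ : F)))
  let pb := IntermediateField.adjoin.powerBasis hint
  have hy' : aeval y (minpoly F pb.gen) = 0 := by
    rw [adjoin.powerBasis_gen, minpoly_gen, hminpoly, map_sub, map_pow, aeval_X, aeval_C,
      ← hΓ.toAlgHom_apply hy hmp]
    exact sub_self _
  let ψ := pb.lift y hy'
  refine ⟨((F⟮m⟯.val.restrictScalars k).prod (ψ.restrictScalars k)).range, ?_, ?_, ?_⟩
  · rintro ⟨x, a⟩ h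
    have hx : x ∈ Γ.dom := mem_dom.2 ⟨a, h⟩
    refine ⟨algebraMap F F⟮m⟯ ⟨x, hx⟩, Prod.ext rfl ?_⟩
    exact (ψ.commutes _).trans (hΓ.toAlgHom_apply h hx)
  · rintro _ ⟨u, rfl⟩ (hu : (u : M) = 0)
    obtain rfl : u = 0 := by simpa using hu
    exact map_zero ψ
  · exact mem_dom.2 ⟨_, AdjoinSimple.gen F m, rfl⟩

theorem exists_algHom_of_pow_mem {Γ₀ : Subalgebra k (M × A)} (hΓ₀ : Γ₀.IsGraph) {p : ℕ}
    [hp : Fact p.Prime] [CharP M p] (hpow : ∀ m : M, ∃ y : A, (m ^ p, y ^ p) ∈ Γ₀) :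
    ∃ ψ : M →ₐ[k] A, ∀ z ∈ Γ₀, ψ z.1 = z.2 := by
  obtain ⟨Γ, -, ⟨hΓ₀Γ, hΓ⟩, hmax⟩ := zorn_le_nonempty₀ {Γ | Γ₀ ≤ Γ ∧ Γ.IsGraph}
    (fun C hC hchain Γ hΓC => ⟨sSup C, ⟨(hC hΓC).1.trans (le_sSup hΓC),
      isGraph_sSup ⟨Γ, hΓC⟩ hchain fun Γ' h => (hC h).2⟩, fun _ => le_sSup⟩)
    Γ₀ ⟨le_rfl, hΓ₀⟩
  have hpow' : ∀ m : M, ∃ y : A, (m ^ p, y ^ p) ∈ Γ := fun m => (hpow m).imp fun _ h => hΓ₀Γ h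
  have htop : ∀ x, x ∈ Γ.dom := by
    by_contra! ⟨m, hm⟩
    obtain ⟨y, hy⟩ := hpow' m
    obtain ⟨Γ', hΓΓ', hΓ', hm'⟩ :=
      hΓ.exists_le_and_mem_dom (fun _ => inv_mem_dom hp.out.ne_zero hpow') hm hy
    exact hm (dom_mono (hmax ⟨hΓ₀Γ.trans hΓΓ', hΓ'⟩ hΓΓ') hm')
  exact ⟨hΓ.toAlgHom.comp ((AlgHom.id k M).codRestrict _ htop),
    fun z hz => hΓ.toAlgHom_apply (hΓ₀Γ hz) _⟩

end IsGraph

end Subalgebra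

theorem BOperator.descend_to_L_general
    (p : ℕ) [Fact p.Prime] (k : Type*) [Field k] [CharP k p]
    (B : Type*) [CommRing B] [Algebra k B] (π : B →ₐ[k] k)
    (hπ : ∀ x ∈ RingHom.ker π, x ^ p = 0)
    (K L M Ω : Type*) [Field K] [Field L] [Field M] [Field Ω]
    [Algebra k K] [Algebra k L] [Algebra k M] [Algebra k Ω]
    [Algebra K L] [IsScalarTower k K L] [Algebra K M] [IsScalarTower k K M]
    [Algebra L Ω] [IsScalarTower k L Ω]
    (δ : K →ₐ[k] L ⊗[k] B)
    (c : M →ₐ[k] Ω ⊗[k] B) (b : M →ₐ[K] L)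
    (hcK : c.comp (IsScalarTower.toAlgHom k K M) =
      (Algebra.TensorProduct.map (IsScalarTower.toAlgHom k L Ω) (AlgHom.id k B)).comp δ)
    (hcb : (BOp.counit k Ω B π).comp c =
      (IsScalarTower.toAlgHom k L Ω).comp (b.restrictScalars k)) :
    ∃ c' : M →ₐ[k] L ⊗[k] B,
      c'.comp (IsScalarTower.toAlgHom k K M) = δ ∧
        (BOp.counit k L B π).comp c' = b.restrictScalars k := by
  set ι := Algebra.TensorProduct.map (IsScalarTower.toAlgHom k L Ω) (AlgHom.id k B)
  have hι : Function.Injective ι :=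
    Algebra.TensorProduct.map_id_injective (algebraMap L Ω).injective
  have : CharP M p := charP_of_injective_algebraMap' k p
  have : CharP L p := charP_of_injective_algebraMap' k p
  let Γ₀ := AlgHom.equalizer (c.comp (AlgHom.fst k M _)) (ι.comp (AlgHom.snd k M _))
  have hΓ₀ : Γ₀.IsGraph := fun z (hz : c z.1 = ι z.2) h0 =>
    hι (by rw [← hz, h0, map_zero, map_zero])
  have hpow (m : M) : (m ^ p, (b m ⊗ₜ 1) ^ p) ∈ Γ₀ := by
    show c (m ^ p) = ι ((b m ⊗ₜ 1) ^ p)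
    rw [map_pow, BOp.pow_eq_counit_pow_tmul_one π p hπ, map_pow, ← AlgHom.comp_apply, hcb]
    simp [ι, Algebra.TensorProduct.tmul_pow]
  obtain ⟨ψ, hψ⟩ := hΓ₀.exists_algHom_of_pow_mem fun m => ⟨_, hpow m⟩
  refine ⟨ψ, AlgHom.ext fun x => hψ (_, δ x) (AlgHom.congr_fun hcK x),
    AlgHom.ext fun m => frobenius_inj L p ?_⟩
  simp [frobenius_def, ← map_pow, hψ _ (hpow m)]

/-- (Proposition 2.8.) Let `k` have characteristic `p > 0` and let `B` be a finite-dimensional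
commutative `k`-algebra with `π : B → k` such that `x ^ p = 0` for all `x ∈ ker π`. Let
`k ⊆ K ⊆ L`, `k ⊆ K ⊆ M` be towers of fields, `Ω` an algebraically closed field extension of
`L`, `δ : K → L ⊗[k] B` a `B`-operator (with `δ₀` the inclusion `K ⊆ L`), and suppose
`c : M → Ω ⊗[k] B` is a `B`-operator and `b : M → L` a `K`-algebra map such that `c|_K = ι ∘ δ`
and `(id_Ω ⊗ π) ∘ c = (L ⊆ Ω) ∘ b`. Then there is a `B`-operator `c' : M → L ⊗[k] B` with
`c'|_K = δ` and `(id_L ⊗ π) ∘ c' = b`. -/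
theorem BOperator.descend_to_L
    (p : ℕ) [Fact p.Prime] (k : Type*) [Field k] [CharP k p]
    (B : Type*) [CommRing B] [Algebra k B] [FiniteDimensional k B] (π : B →ₐ[k] k)
    (hπ : ∀ x ∈ RingHom.ker π, x ^ p = 0)
    (K L M Ω : Type*) [Field K] [Field L] [Field M] [Field Ω]
    [Algebra k K] [Algebra k L] [Algebra k M] [Algebra k Ω]
    [Algebra K L] [IsScalarTower k K L] [Algebra K M] [IsScalarTower k K M]
    [Algebra L Ω] [IsScalarTower k L Ω] [IsAlgClosed Ω]
    (δ : K →ₐ[k] L ⊗[k] B)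
    (hδ0 : (BOp.counit k L B π).comp δ = IsScalarTower.toAlgHom k K L)
    (c : M →ₐ[k] Ω ⊗[k] B) (b : M →ₐ[K] L)
    (hcK : c.comp (IsScalarTower.toAlgHom k K M) =
      (Algebra.TensorProduct.map (IsScalarTower.toAlgHom k L Ω) (AlgHom.id k B)).comp δ)
    (hcb : (BOp.counit k Ω B π).comp c =
      (IsScalarTower.toAlgHom k L Ω).comp (b.restrictScalars k)) :
    ∃ c' : M →ₐ[k] L ⊗[k] B,
      c'.comp (IsScalarTower.toAlgHom k K M) = δ ∧
        (BOp.counit k L B π).comp c' = b.restrictScalars k :=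
  BOperator.descend_to_L_general p k B π hπ K L M Ω δ c b hcK hcb
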